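/- arXiv:2003.10053 — 8 statements merged into one kernel-verified Lean document; each statement's English description precedes it below -/
import Mathlib

section
/- With the continued-fraction data below, suppose p′ and q′ are integers satisfying p p′ + q q′ = 1 and −q < p′ ≤ 0. Then, as rational numbers, ∑_{j=1}^{k−1} 1/(c_{j−1} c_j) = −p′/q. -/
/-!
Let `b` solve the same recursion as `c` with `b₀ = 0`, `b₁ = 1`. The Casoratian
`b_{i+1} c_i - b_i c_{i+1}` of the two solutions is constant, equal to `1`, so
`1 / (c_{j-1} c_j) = b_j / c_j - b_{j-1} / c_{j-1}` and the sum telescopes to `b_{k-1} / q`.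
The same identity at `i = k - 2` gives `p · (-b_{k-1}) ≡ 1 (mod q)`. Since `c`, `b` and `c - b`
all solve the recursion with nonnegative, nondecreasing initial values, they are nondecreasing,
so `0 ≤ b_{k-1} < c_{k-1} = q`, and `-b_{k-1}` is the unique such inverse of `p` in `(-q, 0]`.
-/

variable {R : Type*} [CommRing R]

def SolvesRec (a : ℕ → R) (n : ℕ) (x : ℕ → R) : Prop :=
  ∀ i, i + 2 ≤ n → x (i + 2) = a (i + 2) * x (i + 1) - x i

namespace SolvesRec

variable {a : ℕ → R} {n : ℕ} {x y : ℕ → R}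

theorem sub (hx : SolvesRec a n x) (hy : SolvesRec a n y) : SolvesRec a n (x - y) := by
  intro i hi
  simp only [Pi.sub_apply, hx i hi, hy i hi]
  ring

theorem casoratian_eq (hx : SolvesRec a n x) (hy : SolvesRec a n y) :
    ∀ i, i + 1 ≤ n → x (i + 1) * y i - x i * y (i + 1) = x 1 * y 0 - x 0 * y 1
  | 0, _ => rfl
  | i + 1, hi => by
    rw [hx i hi, hy i hi, ← casoratian_eq hx hy i (by omega)]
    ring

section Ordered

variable [PartialOrder R] [IsOrderedRing R]

theorem le_apply_and_apply_le_succ (hx : SolvesRec a n x)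
    (ha : ∀ i, i + 2 ≤ n → 2 ≤ a (i + 2))
    (h0 : 0 ≤ x 0) (h01 : x 0 ≤ x 1) : ∀ i, i + 1 ≤ n → x 0 ≤ x i ∧ x i ≤ x (i + 1)
  | 0, _ => ⟨le_rfl, h01⟩
  | i + 1, hi => by
    obtain ⟨h0i, hi1⟩ := le_apply_and_apply_le_succ hx ha h0 h01 i (by omega)
    have h0i1 : x 0 ≤ x (i + 1) := h0i.trans hi1
    have hpos : 0 ≤ x (i + 1) := h0.trans h0i1
    refine ⟨h0i1, ?_⟩
    calc x (i + 1) ≤ 2 * x (i + 1) - x i := by linear_combination hi1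
      _ ≤ a (i + 2) * x (i + 1) - x i := by gcongr; exact ha i hi
      _ = x (i + 2) := (hx i hi).symm

theorem apply_zero_le_apply (hx : SolvesRec a n x) (ha : ∀ i, i + 2 ≤ n → 2 ≤ a (i + 2))
    (h0 : 0 ≤ x 0) (h01 : x 0 ≤ x 1) {i : ℕ} (hi : i ≤ n) : x 0 ≤ x i := by
  cases i with
  | zero => exact le_rfl
  | succ i =>
    obtain ⟨h0i, hi1⟩ := hx.le_apply_and_apply_le_succ ha h0 h01 i hi
    exact h0i.trans hi1

end Ordered

end SolvesRec

def tailContinuant (a : ℕ → R) : ℕ → R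
  | 0 => 0
  | 1 => 1
  | n + 2 => a (n + 2) * tailContinuant a (n + 1) - tailContinuant a n

theorem solvesRec_tailContinuant (a : ℕ → R) (n : ℕ) : SolvesRec a n (tailContinuant a) :=
  fun _ _ => rfl

theorem sum_one_div_mul_eq_div {K : Type*} [Field K] {b c : ℕ → K} (t : ℕ) (hb0 : b 0 = 0)
    (hc : ∀ i ≤ t, c i ≠ 0) (hdet : ∀ i < t, b (i + 1) * c i - b i * c (i + 1) = 1) :
    ∑ j ∈ Finset.Icc 1 t, 1 / (c (j - 1) * c j) = b t / c t := by
  have htel : ∀ i < t, 1 / (c i * c (i + 1)) = b (i + 1) / c (i + 1) - b i / c i := by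
    intro i hi
    rw [div_sub_div _ _ (hc _ (by omega)) (hc _ hi.le), ← hdet i hi]
    ring
  rw [← Finset.Ico_add_one_right_eq_Icc, Finset.sum_Ico_eq_sum_range, Nat.add_sub_cancel]
  simp only [add_comm 1, Nat.add_sub_cancel]
  rw [Finset.sum_congr rfl fun i hi => htel i (Finset.mem_range.1 hi),
    Finset.sum_range_sub (fun i => b i / c i), hb0, zero_div, sub_zero]

theorem eq_of_mul_add_mul_eq_one {p q x y s t : ℤ} (hx : p * x + q * s = 1)
    (hy : p * y + q * t = 1) (hxl : -q < x) (hxr : x ≤ 0) (hyl : -q < y) (hyr : y ≤ 0) :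
    x = y := by
  have hcop : IsCoprime q p := ⟨s, x, by linear_combination hx⟩
  have hdvd : q ∣ x - y := hcop.dvd_of_dvd_mul_left ⟨t - s, by linear_combination hx - hy⟩
  have := Int.eq_zero_of_abs_lt_dvd hdvd (abs_sub_lt_iff.2 ⟨by linarith, by linarith⟩)
  linarith

/-- **Lemma 4.1 of the paper.** With the continued-fraction data `c₀ = 1`, `c₁ = a₁`,
`c_i = a_i c_{i−1} − c_{i−2}` for `2 ≤ i ≤ k−1` (where `a_i ≥ 2` for `1 ≤ i ≤ k−1`),
`q = c_{k−1}`, `p = a_k c_{k−1} − c_{k−2}`, if `p p′ + q q′ = 1` and `−q < p′ ≤ 0`,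
then `∑_{j=1}^{k−1} 1/(c_{j−1} c_j) = −p′/q` as rational numbers. -/
theorem sum_inv_c_mul_c_eq (k : ℕ) (hk : 2 ≤ k) (a c : ℕ → ℤ)
    (ha : ∀ i, 1 ≤ i → i ≤ k - 1 → 2 ≤ a i)
    (hc0 : c 0 = 1) (hc1 : c 1 = a 1)
    (hcrec : ∀ i, 2 ≤ i → i ≤ k - 1 → c i = a i * c (i - 1) - c (i - 2))
    (p q p' q' : ℤ) (hq : q = c (k - 1)) (hp : p = a k * c (k - 1) - c (k - 2))
    (hbez : p * p' + q * q' = 1) (hp'l : -q < p') (hp'r : p' ≤ 0) :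
    ∑ j ∈ Finset.Icc 1 (k - 1), (1 : ℚ) / ((c (j - 1) : ℚ) * (c j : ℚ)) =
      -(p' : ℚ) / (q : ℚ) := by
  obtain ⟨n, rfl⟩ : ∃ n, k = n + 2 := ⟨k - 2, by omega⟩
  simp only [Nat.add_sub_cancel, show n + 2 - 1 = n + 1 from rfl] at hq hp ⊢
  set b := tailContinuant a
  have hc : SolvesRec a (n + 1) c := fun i hi => hcrec (i + 2) (by omega) (by omega)
  have hcb : SolvesRec a (n + 1) (c - b) := hc.sub (solvesRec_tailContinuant a _)
  have ha' : ∀ i, i + 2 ≤ n + 1 → 2 ≤ a (i + 2) := fun i _ => ha (i + 2) (by omega) (by omega)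
  have ha1 : 2 ≤ a 1 := ha 1 le_rfl (by omega)
  have hcpos : ∀ i ≤ n + 1, 1 ≤ c i := fun i hi => by
    simpa [hc0] using hc.apply_zero_le_apply ha' (by omega) (by omega) hi
  have hdet : ∀ i, i + 1 ≤ n + 1 → b (i + 1) * c i - b i * c (i + 1) = 1 := fun i hi => by
    simpa [b, tailContinuant, hc0] using (solvesRec_tailContinuant a _).casoratian_eq hc i hi
  have hb : 0 ≤ b (n + 1) :=
    (solvesRec_tailContinuant a _).apply_zero_le_apply ha' le_rfl zero_le_one le_rfl
  have hcb0 : (c - b) 0 = 1 := by simp [b, tailContinuant, hc0]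
  have hcb1 : (c - b) 1 = a 1 - 1 := by simp [b, tailContinuant, hc1]
  have hbc : 1 ≤ c (n + 1) - b (n + 1) :=
    hcb0 ▸ hcb.apply_zero_le_apply ha' (by omega) (by omega) le_rfl
  have hp' : p' = -b (n + 1) :=
    eq_of_mul_add_mul_eq_one hbez (t := a (n + 2) * b (n + 1) - b n)
      (by rw [hp, hq]; linear_combination hdet n le_rfl) hp'l hp'r (by omega) (by omega)
  rw [hp', hq]
  refine (sum_one_div_mul_eq_div (b := fun i => (b i : ℚ)) (c := fun i => (c i : ℚ)) (n + 1)
    (by simp [b, tailContinuant]) (fun i hi => Int.cast_ne_zero.2 (by linarith [hcpos i hi]))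
    (fun i hi => by exact_mod_cast hdet i hi)).trans ?_
  push_cast
  ring
end

section
/- Let a < b be real numbers, β ∈ ℂ, γ ∈ ℝ with γ ≠ 0, and α ∈ (a,b) with sin(α+β) ≠ 0. Then there exist constants C > 0 and r₀ such that for every integer r ≥ r₀, | ∫_a^b sin(x+β) e^{(r/(4πi)) γ (x−α)²} dx − sin(α+β) · 2π / √(iγr) | ≤ C / r, where √(iγr) denotes the principal square root (so √(iγr) = √(γr) e^{iπ/4} when γ > 0 and √(iγr) = √(|γ|r) e^{−iπ/4} when γ < 0). In other words, ∫_a^b sin(x+β) e^{(r/(4πi)) γ (x−α)²} dx = sin(α+β) (2π/√(iγ)) r^{−1/2} (1 + O(r^{−1/2})) as r → ∞. -/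
/-!
With `s = iγr/(4π)` the phase is `-s (x - α)²`. Writing `sin (z + β) = sin (α + β) + (z - α) g z`
with `g` entire splits the integral into `sin (α + β)` times a truncated Fresnel integral plus a
remainder. Since `(x - α) e^{-s (x - α)²}` is `-(2s)⁻¹` times the derivative of `e^{-s (x - α)²}`,
one integration by parts makes the remainder `O(1/|s|)`. The same integration by parts bounds the
tails `∫_T^X e^{-s u²} du` by `1/(|s| T)` uniformly in `X` and in `Re s ≥ 0`. For `Re s > 0` this
compares the truncated integral with the Gaussian integral `√(π/s)` over `ℝ`, and the comparison
passes to `Re s = 0` by continuity in `s`.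
-/

open Real MeasureTheory Complex Set Filter Topology intervalIntegral

lemma norm_cexp_neg_mul_sq_le_one {s : ℂ} (hs : 0 ≤ s.re) (x : ℝ) :
    ‖cexp (-s * x ^ 2)‖ ≤ 1 := by
  rw [norm_cexp_neg_mul_sq, Real.exp_le_one_iff]
  nlinarith [sq_nonneg x]

lemma hasDerivAt_cexp_neg_mul_sq (s : ℂ) (x : ℝ) :
    HasDerivAt (fun u : ℝ => cexp (-s * u ^ 2)) (-2 * s * x * cexp (-s * x ^ 2)) x := by
  convert ((hasDerivAt_pow 2 (x : ℂ)).const_mul (-s)).comp_ofReal.cexp using 1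
  push_cast
  ring

lemma integral_inv_sq_of_pos {T X : ℝ} (hT : 0 < T) (hTX : T ≤ X) :
    ∫ u in T..X, (u ^ 2)⁻¹ = T⁻¹ - X⁻¹ := by
  have hpos : ∀ u ∈ uIcc T X, u ≠ 0 := fun u hu =>
    (hT.trans_le (uIcc_of_le hTX ▸ hu).1).ne'
  have hcont : ContinuousOn (fun u : ℝ => (u ^ 2)⁻¹) (uIcc T X) :=
    (continuousOn_pow 2).inv₀ fun u hu => pow_ne_zero 2 (hpos u hu)
  rw [integral_eq_sub_of_hasDerivAt (f := fun u => -u⁻¹)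
    (fun u hu => by simpa using (hasDerivAt_inv (hpos u hu)).fun_neg) hcont.intervalIntegrable]
  ring

lemma norm_integral_cexp_neg_mul_sq_le {s : ℂ} (hs₀ : s ≠ 0) (hs : 0 ≤ s.re) {T X : ℝ}
    (hT : 0 < T) (hTX : T ≤ X) :
    ‖∫ u in T..X, cexp (-s * u ^ 2)‖ ≤ 1 / (‖s‖ * T) := by
  have hpos : ∀ u ∈ uIcc T X, u ≠ 0 := fun u hu => (hT.trans_le (uIcc_of_le hTX ▸ hu).1).ne'
  have hpos' : ∀ u ∈ uIcc T X, (u : ℂ) ≠ 0 := fun u hu => ofReal_ne_zero.2 (hpos u hu)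
  -- integrate by parts against `U u = -(2 s u)⁻¹`, for which `U u * d/du e^{-s u²} = e^{-s u²}`
  set U : ℝ → ℂ := fun u => -(2 * s)⁻¹ * (u : ℂ)⁻¹
  set U' : ℝ → ℂ := fun u => (2 * s)⁻¹ * ((u : ℂ) ^ 2)⁻¹
  have hU : ∀ u ∈ uIcc T X, HasDerivAt U (U' u) u := fun u hu => by
    convert ((hasDerivAt_inv (hpos' u hu)).const_mul (-(2 * s)⁻¹)).comp_ofReal using 1
    ring
  have hU'_cont : ContinuousOn U' (uIcc T X) :=
    continuousOn_const.mul <| (continuous_ofReal.pow 2).continuousOn.inv₀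
      fun u hu => pow_ne_zero 2 (hpos' u hu)
  have hnormU : ∀ u : ℝ, 0 < u → ‖U u‖ = (2 * ‖s‖)⁻¹ * u⁻¹ := fun u hu => by
    simp [U, abs_of_pos hu]
  have hnormU' : ∀ u : ℝ, ‖U' u‖ = (2 * ‖s‖)⁻¹ * (u ^ 2)⁻¹ := fun u => by
    simp [U']
  have ibp := intervalIntegral.integral_mul_deriv_eq_deriv_mul hU
    (fun u _ => hasDerivAt_cexp_neg_mul_sq s u) hU'_cont.intervalIntegrable
    (Continuous.intervalIntegrable (by fun_prop) T X)
  have hE : ∫ u in T..X, cexp (-s * u ^ 2) =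
      ∫ u in T..X, U u * (-2 * s * u * cexp (-s * u ^ 2)) :=
    integral_congr fun u hu => by simp only [U]; field_simp [hpos' u hu]
  have hrest : ‖∫ u in T..X, U' u * cexp (-s * u ^ 2)‖ ≤ (2 * ‖s‖)⁻¹ * (T⁻¹ - X⁻¹) := by
    rw [← integral_inv_sq_of_pos hT hTX, ← intervalIntegral.integral_const_mul]
    refine norm_integral_le_of_norm_le hTX (ae_of_all _ fun u hu => ?_) ?_
    · rw [norm_mul, hnormU']
      exact mul_le_of_le_one_right (by positivity) (norm_cexp_neg_mul_sq_le_one hs u)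
    · exact (continuousOn_const.mul <| (continuousOn_pow 2).inv₀
        fun u hu => pow_ne_zero 2 (hpos u hu)).intervalIntegrable
  have hX : 0 < X := hT.trans_le hTX
  rw [hE, ibp]
  calc _ ≤ ‖U X * cexp (-s * X ^ 2)‖ + ‖U T * cexp (-s * T ^ 2)‖ +
        ‖∫ u in T..X, U' u * cexp (-s * u ^ 2)‖ := norm_sub_le_of_le (norm_sub_le _ _) le_rfl
    _ ≤ (2 * ‖s‖)⁻¹ * X⁻¹ + (2 * ‖s‖)⁻¹ * T⁻¹ + (2 * ‖s‖)⁻¹ * (T⁻¹ - X⁻¹) := by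
      gcongr
      · rw [norm_mul, hnormU X hX]
        exact mul_le_of_le_one_right (by positivity) (norm_cexp_neg_mul_sq_le_one hs X)
      · rw [norm_mul, hnormU T hT]
        exact mul_le_of_le_one_right (by positivity) (norm_cexp_neg_mul_sq_le_one hs T)
    _ = 1 / (‖s‖ * T) := by field_simp; ring

lemma norm_integral_cexp_neg_mul_sq_sub_le_of_re_pos {s : ℂ} (hs : 0 < s.re) {A B : ℝ}
    (hA : A < 0) (hB : 0 < B) :
    ‖(∫ u in A..B, cexp (-s * u ^ 2)) - (π / s) ^ (1 / 2 : ℂ)‖ ≤ (B⁻¹ + (-A)⁻¹) / ‖s‖ := by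
  set f : ℝ → ℂ := fun u => cexp (-s * u ^ 2)
  have hs₀ : s ≠ 0 := fun h => by simp [h] at hs
  have hf : ∀ a b : ℝ, IntervalIntegrable f volume a b :=
    Continuous.intervalIntegrable (by fun_prop)
  have hlim : Tendsto (fun X => ∫ u in -X..X, f u) atTop (𝓝 ((π / s) ^ (1 / 2 : ℂ))) := by
    rw [← integral_gaussian_complex hs]
    exact intervalIntegral_tendsto_integral (integrable_cexp_neg_mul_sq hs)
      tendsto_neg_atTop_atBot tendsto_id
  have hsplit : ∀ X, (∫ u in -X..X, f u) - ∫ u in A..B, f u =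
      (∫ u in -A..X, f u) + ∫ u in B..X, f u := fun X => by
    have hsymm : ∫ u in -X..A, f u = ∫ u in -A..X, f u := by
      simpa [f] using (integral_comp_neg (a := -A) (b := X) f).symm
    rw [← integral_add_adjacent_intervals (hf (-X) A) (hf A X),
      ← integral_add_adjacent_intervals (hf A B) (hf B X), hsymm]
    ring
  refine le_of_tendsto (tendsto_const_nhds.sub hlim).norm ?_
  filter_upwards [eventually_ge_atTop B, eventually_ge_atTop (-A)] with X hXB hXA
  rw [norm_sub_rev, hsplit X]
  calc _ ≤ 1 / (‖s‖ * -A) + 1 / (‖s‖ * B) := norm_add_le_of_le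
        (norm_integral_cexp_neg_mul_sq_le hs₀ hs.le (neg_pos.2 hA) hXA)
        (norm_integral_cexp_neg_mul_sq_le hs₀ hs.le hB hXB)
    _ = (B⁻¹ + (-A)⁻¹) / ‖s‖ := by field_simp; ring

lemma ofReal_div_mem_slitPlane {t : ℝ} (ht : 0 < t) {s : ℂ} (hs₀ : s ≠ 0) (hs : 0 ≤ s.re) :
    (t : ℂ) / s ∈ slitPlane := by
  have hnormSq : 0 < normSq s := normSq_pos.2 hs₀
  rw [mem_slitPlane_iff, div_re, div_im]
  rcases hs.lt_or_eq with hs | hs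
  · left
    simp only [ofReal_re, ofReal_im, zero_mul, zero_div, add_zero]
    positivity
  · right
    have him : s.im ≠ 0 := fun h => hs₀ (ext hs.symm h)
    simp [him, ht.ne', hnormSq.ne']

lemma norm_integral_cexp_neg_mul_sq_sub_le {s : ℂ} (hs₀ : s ≠ 0) (hs : 0 ≤ s.re) {A B : ℝ}
    (hA : A < 0) (hB : 0 < B) :
    ‖(∫ u in A..B, cexp (-s * u ^ 2)) - (π / s) ^ (1 / 2 : ℂ)‖ ≤ (B⁻¹ + (-A)⁻¹) / ‖s‖ := by
  -- perturb `s` to `s + ε` with `ε > 0`, where the integral over `ℝ` converges absolutely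
  have hcont : ContinuousAt (fun z : ℂ =>
      ‖(∫ u in A..B, cexp (-z * u ^ 2)) - (π / z) ^ (1 / 2 : ℂ)‖ - (B⁻¹ + (-A)⁻¹) / ‖z‖) s := by
    have hint : Continuous fun z : ℂ => ∫ u in A..B, cexp (-z * u ^ 2) :=
      continuous_parametric_intervalIntegral_of_continuous' (by fun_prop) A B
    have hsqrt : ContinuousAt (fun z : ℂ => (π / z) ^ (1 / 2 : ℂ)) s :=
      (continuousAt_const.div continuousAt_id hs₀).cpow continuousAt_const
        (ofReal_div_mem_slitPlane pi_pos hs₀ hs)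
    exact ((hint.continuousAt.sub hsqrt).norm).sub
      (continuousAt_const.div continuous_norm.continuousAt (norm_ne_zero_iff.2 hs₀))
  have hperturb : Tendsto (fun ε : ℝ => s + ε) (𝓝[>] 0) (𝓝 s) := by
    have h : Continuous fun ε : ℝ => s + ε := by fun_prop
    simpa using (h.tendsto 0).mono_left nhdsWithin_le_nhds
  refine sub_nonpos.1 <| le_of_tendsto (hcont.tendsto.comp hperturb) ?_
  filter_upwards [self_mem_nhdsWithin] with ε (hε : 0 < ε)
  refine sub_nonpos.2 <| norm_integral_cexp_neg_mul_sq_sub_le_of_re_pos ?_ hA hB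
  rw [add_re, ofReal_re]
  exact add_pos_of_nonneg_of_pos hs hε

lemma exists_norm_integral_mul_cexp_neg_mul_sq_le {h : ℝ → ℂ} (hh : ContDiff ℝ 1 h) (a b c : ℝ) :
    ∃ K, 0 ≤ K ∧ ∀ s : ℂ, s ≠ 0 → 0 ≤ s.re →
      ‖∫ x in a..b, (x - c) * h x * cexp (-s * (x - c) ^ 2)‖ ≤ K / ‖s‖ := by
  obtain ⟨M, hM⟩ := (isCompact_uIcc (a := a) (b := b)).exists_bound_of_continuousOn
    (hh.continuous_deriv le_rfl).continuousOn
  refine ⟨(‖h a‖ + ‖h b‖ + max M 0 * |b - a|) / 2, by positivity, fun s hs₀ hs => ?_⟩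
  set E : ℝ → ℂ := fun x => cexp (-s * (x - c) ^ 2)
  have hE : ∀ x : ℝ, HasDerivAt E (-2 * s * (x - c) * E x) x := fun x => by
    simpa only [E, ofReal_sub] using (hasDerivAt_cexp_neg_mul_sq s (x - c)).comp_sub_const x c
  have hEnorm : ∀ x : ℝ, ‖E x‖ ≤ 1 := fun x => by
    simpa [E] using norm_cexp_neg_mul_sq_le_one hs (x - c)
  have hh' : ∀ x, HasDerivAt h (deriv h x) x := fun x =>
    ((hh.differentiable one_ne_zero) x).hasDerivAt
  have ibp := intervalIntegral.integral_mul_deriv_eq_deriv_mul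
    (fun x _ => (hh' x).const_mul (-(2 * s)⁻¹)) (fun x _ => hE x)
    ((continuous_const.mul (hh.continuous_deriv le_rfl)).intervalIntegrable a b)
    (Continuous.intervalIntegrable (by fun_prop) a b)
  have hcongr : ∫ x in a..b, (x - c) * h x * cexp (-s * (x - c) ^ 2) =
      ∫ x in a..b, -(2 * s)⁻¹ * h x * (-2 * s * (x - c) * E x) :=
    integral_congr fun x _ => by simp only [E]; field_simp
  have hcoef : ‖-(2 * s)⁻¹‖ = (2 * ‖s‖)⁻¹ := by simp
  have hrest : ‖∫ x in a..b, -(2 * s)⁻¹ * deriv h x * E x‖ ≤ (2 * ‖s‖)⁻¹ * max M 0 * |b - a| :=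
    norm_integral_le_of_norm_le_const fun x hx => by
      rw [norm_mul, norm_mul, hcoef]
      rw [mul_assoc]
      gcongr
      exact (mul_le_of_le_one_right (norm_nonneg _) (hEnorm x)).trans
        ((hM x (uIoc_subset_uIcc hx)).trans (le_max_left M 0))
  have hend : ∀ y, ‖-(2 * s)⁻¹ * h y * E y‖ ≤ (2 * ‖s‖)⁻¹ * ‖h y‖ := fun y => by
    rw [norm_mul, norm_mul, hcoef]
    exact mul_le_of_le_one_right (by positivity) (hEnorm y)
  rw [hcongr, ibp]
  calc _ ≤ ‖-(2 * s)⁻¹ * h b * E b‖ + ‖-(2 * s)⁻¹ * h a * E a‖ +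
        ‖∫ x in a..b, -(2 * s)⁻¹ * deriv h x * E x‖ := norm_sub_le_of_le (norm_sub_le _ _) le_rfl
    _ ≤ (2 * ‖s‖)⁻¹ * ‖h b‖ + (2 * ‖s‖)⁻¹ * ‖h a‖ + (2 * ‖s‖)⁻¹ * max M 0 * |b - a| := by
      gcongr <;> apply_rules
    _ = (‖h a‖ + ‖h b‖ + max M 0 * |b - a|) / 2 / ‖s‖ := by field_simp; ring

lemma exists_norm_integral_sub_mul_cexp_neg_mul_sq_le {f : ℂ → ℂ} (hf : Differentiable ℂ f)
    (a b c : ℝ) :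
    ∃ K, 0 ≤ K ∧ ∀ s : ℂ, s ≠ 0 → 0 ≤ s.re →
      ‖∫ x in a..b, (f x - f c) * cexp (-s * (x - c) ^ 2)‖ ≤ K / ‖s‖ := by
  have hg : Differentiable ℂ (dslope f c) := fun z =>
    ((differentiableOn_dslope univ_mem).2 hf.differentiableOn z (mem_univ z)).differentiableAt
      univ_mem
  obtain ⟨K, hK, hbound⟩ := exists_norm_integral_mul_cexp_neg_mul_sq_le
    ((hg.contDiff.restrict_scalars ℝ).comp ofRealCLM.contDiff) a b c
  have hfactor : ∀ z : ℂ, (z - c) * dslope f c z = f z - f c := sub_smul_dslope f c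
  refine ⟨K, hK, fun s hs₀ hs => ?_⟩
  simpa only [Function.comp_apply, ofRealCLM_apply, hfactor] using hbound s hs₀ hs

lemma exists_norm_integral_mul_cexp_neg_mul_sq_sub_le {f : ℂ → ℂ} (hf : Differentiable ℂ f)
    {a b c : ℝ} (hc : c ∈ Ioo a b) :
    ∃ K, 0 ≤ K ∧ ∀ s : ℂ, s ≠ 0 → 0 ≤ s.re →
      ‖(∫ x in a..b, f x * cexp (-s * (x - c) ^ 2)) - f c * (π / s) ^ (1 / 2 : ℂ)‖ ≤
        K / ‖s‖ := by
  obtain ⟨K, hK, hrem⟩ := exists_norm_integral_sub_mul_cexp_neg_mul_sq_le hf a b c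
  have hcb : 0 < b - c := sub_pos.2 hc.2
  have hac : a - c < 0 := sub_neg.2 hc.1
  have hD : 0 < (b - c)⁻¹ + (-(a - c))⁻¹ := add_pos (inv_pos.2 hcb) (inv_pos.2 (neg_pos.2 hac))
  refine ⟨‖f c‖ * ((b - c)⁻¹ + (-(a - c))⁻¹) + K, by positivity, fun s hs₀ hs => ?_⟩
  have hsplit : ∫ x in a..b, f x * cexp (-s * (x - c) ^ 2) =
      f c * (∫ u in (a - c)..(b - c), cexp (-s * u ^ 2)) +
        ∫ x in a..b, (f x - f c) * cexp (-s * (x - c) ^ 2) := by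
    have hf' : Continuous f := hf.continuous
    rw [← integral_comp_sub_right (fun u : ℝ => cexp (-s * u ^ 2)) c,
      ← intervalIntegral.integral_const_mul, ← integral_add
        (Continuous.intervalIntegrable (by fun_prop) a b)
        (Continuous.intervalIntegrable (by fun_prop) a b)]
    refine integral_congr fun x _ => ?_
    push_cast
    ring
  rw [hsplit, add_sub_right_comm, ← mul_sub, add_div, mul_div_assoc]
  refine norm_add_le_of_le ?_ (hrem s hs₀ hs)
  rw [norm_mul]
  gcongr
  exact norm_integral_cexp_neg_mul_sq_sub_le hs₀ hs hac hcb

lemma ofReal_mul_cpow {t : ℝ} (ht : 0 < t) {z : ℂ} (hz : z ≠ 0) (w : ℂ) :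
    ((t : ℂ) * z) ^ w = (t : ℂ) ^ w * z ^ w := by
  have ht' : (t : ℂ) ≠ 0 := ofReal_ne_zero.2 ht.ne'
  rw [cpow_def_of_ne_zero (mul_ne_zero ht' hz), log_ofReal_mul ht hz, add_mul, Complex.exp_add,
    ← cpow_def_of_ne_zero hz, cpow_def_of_ne_zero ht', ofReal_log ht.le]

lemma sq_div_cpow_half {t : ℝ} (ht : 0 < t) {w : ℂ} (hw : w ∈ slitPlane) :
    ((t : ℂ) ^ 2 / w) ^ (1 / 2 : ℂ) = t / w ^ (1 / 2 : ℂ) := by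
  rw [div_eq_mul_inv, ← ofReal_pow, ofReal_mul_cpow (by positivity)
    (inv_ne_zero (slitPlane_ne_zero hw)), inv_cpow _ _ (slitPlane_arg_ne_pi hw), ofReal_pow,
    one_div, sq_cpow_two_inv (by simpa), div_eq_mul_inv]

lemma cpow_half_pi_div_I_mul {t : ℝ} (ht : t ≠ 0) :
    ((π : ℂ) / (I * (t / (4 * π) : ℝ))) ^ (1 / 2 : ℂ) = 2 * π / (I * t) ^ (1 / 2 : ℂ) := by
  have hslit : I * t ∈ slitPlane := mem_slitPlane_iff.2 (Or.inr (by simpa using ht))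
  have hbase : (π : ℂ) / (I * (t / (4 * π) : ℝ)) = ((2 * π : ℝ) : ℂ) ^ 2 / (I * t) := by
    push_cast
    field_simp
    ring
  rw [hbase, sq_div_cpow_half (by positivity) hslit]
  push_cast
  rfl

theorem gaussian_integral_stationary_inside_general (a b : ℝ) (β : ℂ)
    (γ : ℝ) (hγ : γ ≠ 0) (α : ℝ) (hα : α ∈ Set.Ioo a b) :
    ∃ C : ℝ, 0 < C ∧ ∃ r₀ : ℕ, ∀ r : ℕ, r₀ ≤ r →
      ‖(∫ x : ℝ in a..b, Complex.sin ((x : ℂ) + β) *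
            Complex.exp (((r : ℂ) / (4 * (π : ℂ) * Complex.I)) * (γ : ℂ) *
              ((x : ℂ) - (α : ℂ)) ^ 2)) -
          Complex.sin ((α : ℂ) + β) * 2 * (π : ℂ) /
            (Complex.I * (γ : ℂ) * (r : ℂ)) ^ ((1 : ℂ) / 2)‖ ≤
        C / (r : ℝ) := by
  obtain ⟨K, hK, hstationary⟩ := exists_norm_integral_mul_cexp_neg_mul_sq_sub_le
    (f := fun z => sin (z + β)) (by fun_prop) hα
  refine ⟨4 * π * (K + 1) / |γ|, by positivity, 1, fun r hr => ?_⟩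
  have hr₀ : (0 : ℝ) < r := by exact_mod_cast hr
  set s : ℂ := I * (γ * r / (4 * π) : ℝ)
  have hs₀ : s ≠ 0 := mul_ne_zero I_ne_zero (ofReal_ne_zero.2 (by positivity))
  have hsre : s.re = 0 := by rw [I_mul_re, ofReal_im, neg_zero]
  have hphase : (r : ℂ) / (4 * π * I) * γ = -s := by
    simp only [s]
    push_cast
    field_simp
    linear_combination (r * γ : ℂ) * I_sq
  have hsqrt : (π / s) ^ (1 / 2 : ℂ) = 2 * π / (I * γ * r) ^ ((1 : ℂ) / 2) := by
    simp only [s]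
    simpa [mul_assoc] using cpow_half_pi_div_I_mul (mul_ne_zero hγ hr₀.ne')
  calc _ = ‖(∫ x in a..b, sin (x + β) * cexp (-s * (x - α) ^ 2)) -
          sin (α + β) * (π / s) ^ (1 / 2 : ℂ)‖ := by
        simp only [hphase]
        rw [hsqrt, mul_assoc, mul_div_assoc]
    _ ≤ K / ‖s‖ := hstationary s hs₀ hsre.ge
    _ = 4 * π * K / |γ| / r := by
      rw [show ‖s‖ = |γ| * r / (4 * π) by simp [s, abs_of_pos pi_pos]]
      field_simp
    _ ≤ _ := by gcongr; linarith

/-- **Lemma (Gaussian integral with stationary point inside).**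
If `a < α < b`, `γ ∈ ℝ \ {0}`, `β ∈ ℂ` and `sin(α+β) ≠ 0`, then
`∫_a^b sin(x+β) e^{(r/(4πi)) γ (x−α)²} dx = sin(α+β) (2π/√(iγ)) r^{−1/2} (1 + O(r^{−1/2}))`,
i.e. the integral differs from `sin(α+β) · 2π/√(iγr)` by `O(1/r)`, where `√w = e^{(1/2) log w}`
is the principal square root. -/
theorem gaussian_integral_stationary_inside (a b : ℝ) (hab : a < b) (β : ℂ)
    (γ : ℝ) (hγ : γ ≠ 0) (α : ℝ) (hα : α ∈ Set.Ioo a b)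
    (hsin : Complex.sin ((α : ℂ) + β) ≠ 0) :
    ∃ C : ℝ, 0 < C ∧ ∃ r₀ : ℕ, ∀ r : ℕ, r₀ ≤ r →
      ‖(∫ x : ℝ in a..b, Complex.sin ((x : ℂ) + β) *
            Complex.exp (((r : ℂ) / (4 * (π : ℂ) * Complex.I)) * (γ : ℂ) *
              ((x : ℂ) - (α : ℂ)) ^ 2)) -
          Complex.sin ((α : ℂ) + β) * 2 * (π : ℂ) /
            (Complex.I * (γ : ℂ) * (r : ℂ)) ^ ((1 : ℂ) / 2)‖ ≤
        C / (r : ℝ) :=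
  gaussian_integral_stationary_inside_general a b β γ hγ α hα
end

section
/- Let a < b be real numbers, β ∈ ℂ, γ ∈ ℝ with γ ≠ 0, and let α be a real number with α ∉ [a,b]. Then there exist constants C > 0 and r₀ such that for every integer r ≥ r₀, | ∫_a^b sin(x+β) e^{(r/(4πi)) γ (x−α)²} dx | ≤ C / r. -/
/-!
Non-stationary phase. With `t = -γ r / (2π)` the integrand is `sin (x + β) · exp (i t ψ x)` for
`ψ x = (x - α)² / 2`, whose derivative `x - α` does not vanish on `[a, b]`. Writing the amplitude as
`h · ψ'` with `h x = sin (x + β) / (x - α)` and integrating by parts against `exp (i t ψ)`, which has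
derivative `i t ψ' exp (i t ψ)` and modulus one, bounds `|t|` times the integral by
`|h a| + |h b| + ∫ |h'|`, a constant independent of `r`.
-/

open Real MeasureTheory Set

theorem abs_mul_norm_integral_mul_deriv_mul_exp_le {a b t : ℝ} (hab : a ≤ b) {h h' : ℝ → ℂ}
    {ψ ψ' : ℝ → ℝ} (hh : ∀ x ∈ uIcc a b, HasDerivAt h (h' x) x)
    (hψ : ∀ x ∈ uIcc a b, HasDerivAt ψ (ψ' x) x) (hh' : IntervalIntegrable h' volume a b)
    (hψ' : IntervalIntegrable ψ' volume a b) :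
    |t| * ‖∫ x in a..b, h x * ψ' x * Complex.exp (↑(t * ψ x) * Complex.I)‖ ≤
      ‖h a‖ + ‖h b‖ + ∫ x in a..b, ‖h' x‖ := by
  set e : ℝ → ℂ := fun x => Complex.exp (↑(t * ψ x) * Complex.I)
  have he_norm (x : ℝ) : ‖e x‖ = 1 := Complex.norm_exp_ofReal_mul_I _
  have he (x : ℝ) (hx : x ∈ uIcc a b) : HasDerivAt e (e x * (↑(t * ψ' x) * Complex.I)) x :=
    (((hψ x hx).const_mul t).ofReal_comp.mul_const Complex.I).cexp
  have he' : IntervalIntegrable (fun x => e x * (↑(t * ψ' x) * Complex.I)) volume a b := by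
    have htψ' : IntervalIntegrable (fun x => (↑(t * ψ' x) * Complex.I : ℂ)) volume a b :=
      IntervalIntegrable.mul_const
        ⟨(hψ'.const_mul t).1.ofReal, (hψ'.const_mul t).2.ofReal⟩ Complex.I
    exact htψ'.continuousOn_mul fun x hx => (he x hx).continuousAt.continuousWithinAt
  have hibp := intervalIntegral.integral_mul_deriv_eq_deriv_mul hh he hh' he'
  calc |t| * ‖∫ x in a..b, h x * ψ' x * e x‖
      = ‖∫ x in a..b, h x * (e x * (↑(t * ψ' x) * Complex.I))‖ := by
        have hscale : ∫ x in a..b, h x * (e x * (↑(t * ψ' x) * Complex.I)) =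
            (t * Complex.I) * ∫ x in a..b, h x * ψ' x * e x := by
          rw [← intervalIntegral.integral_const_mul]; congr 1; ext x; push_cast; ring
        rw [hscale, norm_mul, norm_mul, Complex.norm_I, Complex.norm_real, Real.norm_eq_abs,
          mul_one]
    _ ≤ ‖h b * e b - h a * e a‖ + ‖∫ x in a..b, h' x * e x‖ := by
        rw [hibp]; exact norm_sub_le _ _
    _ ≤ ‖h a‖ + ‖h b‖ + ∫ x in a..b, ‖h' x‖ := by
        have hbd := norm_sub_le (h b * e b) (h a * e a)
        have hint := intervalIntegral.norm_integral_le_integral_norm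
          (f := fun x => h' x * e x) (μ := volume) hab
        simp only [norm_mul, he_norm, mul_one] at hbd hint
        linarith

theorem hasDerivAt_sin_add_div_sub {α x : ℝ} (β : ℂ) (hx : x ≠ α) :
    HasDerivAt (fun y : ℝ => Complex.sin (y + β) / (y - α))
      ((Complex.cos (x + β) * (x - α) - Complex.sin (x + β)) / (x - α) ^ 2) x := by
  have hsin : HasDerivAt (fun y : ℝ => Complex.sin (y + β)) (Complex.cos (x + β)) x := by
    simpa using ((hasDerivAt_id (x : ℂ)).add_const β).csin.comp_ofReal
  have hden : HasDerivAt (fun y : ℝ => (y : ℂ) - α) 1 x := by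
    simpa using ((hasDerivAt_id (x : ℂ)).sub_const (α : ℂ)).comp_ofReal
  exact (hsin.div hden (by simpa [sub_eq_zero] using hx)).congr_deriv (by ring)

theorem exists_abs_mul_norm_integral_sin_mul_exp_sq_le {a b α : ℝ} (hab : a ≤ b)
    (hα : α ∉ Icc a b) (β : ℂ) :
    ∃ C, 0 ≤ C ∧ ∀ t : ℝ, |t| * ‖∫ x in a..b, Complex.sin (x + β) *
      Complex.exp (((t * ((x - α) ^ 2 / 2) : ℝ) : ℂ) * Complex.I)‖ ≤ C := by
  have hne : ∀ x ∈ uIcc a b, x ≠ α := by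
    rintro x hx rfl
    exact hα (uIcc_of_le hab ▸ hx)
  set h : ℝ → ℂ := fun y => Complex.sin (y + β) / (y - α)
  set h' : ℝ → ℂ := fun x => (Complex.cos (x + β) * (x - α) - Complex.sin (x + β)) / (x - α) ^ 2
  have hh' : IntervalIntegrable h' volume a b := by
    refine ContinuousOn.intervalIntegrable (.div (by fun_prop) (by fun_prop) fun x hx => ?_)
    exact pow_ne_zero 2 (sub_ne_zero.mpr (Complex.ofReal_injective.ne (hne x hx)))
  refine ⟨‖h a‖ + ‖h b‖ + ∫ x in a..b, ‖h' x‖, ?_, fun t => ?_⟩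
  · have := intervalIntegral.integral_nonneg (μ := volume) hab fun x _ => norm_nonneg (h' x)
    positivity
  have hamplitude : EqOn (fun x : ℝ => Complex.sin (x + β) *
      Complex.exp (((t * ((x - α) ^ 2 / 2) : ℝ) : ℂ) * Complex.I))
      (fun x => h x * ((x - α : ℝ) : ℂ) *
        Complex.exp (((t * ((x - α) ^ 2 / 2) : ℝ) : ℂ) * Complex.I))
      (uIcc a b) := by
    intro x hx
    have hx : (x : ℂ) - α ≠ 0 := by simpa [sub_eq_zero] using hne x hx
    simp only [h, Complex.ofReal_sub, div_mul_cancel₀ _ hx]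
  rw [intervalIntegral.integral_congr hamplitude]
  exact abs_mul_norm_integral_mul_deriv_mul_exp_le hab
    (fun x hx => hasDerivAt_sin_add_div_sub β (hne x hx))
    (fun x _ => by simpa using ((hasDerivAt_id x).sub_const α).pow 2 |>.div_const 2) hh'
    ((by fun_prop : Continuous fun x : ℝ => x - α).intervalIntegrable a b)

/-- **Lemma (Gaussian integral with stationary point outside).**
If `a < b`, `γ ∈ ℝ \ {0}`, `β ∈ ℂ` and `α ∈ ℝ` with `α ∉ [a,b]`, then
`|∫_a^b sin(x+β) e^{(r/(4πi)) γ (x−α)²} dx| ≤ C/r` for all sufficiently large integers `r`. -/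
theorem gaussian_integral_stationary_outside (a b : ℝ) (hab : a < b) (β : ℂ)
    (γ : ℝ) (hγ : γ ≠ 0) (α : ℝ) (hα : α ∉ Set.Icc a b) :
    ∃ C : ℝ, 0 < C ∧ ∃ r₀ : ℕ, ∀ r : ℕ, r₀ ≤ r →
      ‖∫ x : ℝ in a..b, Complex.sin ((x : ℂ) + β) *
          Complex.exp (((r : ℂ) / (4 * (π : ℂ) * Complex.I)) * (γ : ℂ) *
            ((x : ℂ) - (α : ℂ)) ^ 2)‖ ≤
        C / (r : ℝ) := by
  obtain ⟨C, hC, hbound⟩ := exists_abs_mul_norm_integral_sin_mul_exp_sq_le hab.le hα β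
  refine ⟨2 * π * (C + 1) / |γ|, by positivity, 1, fun r hr => ?_⟩
  have hr : (0 : ℝ) < r := by exact_mod_cast hr
  have hphase (x : ℝ) : (r : ℂ) / (4 * π * Complex.I) * γ * (x - α) ^ 2 =
      ((-(γ * r / (2 * π)) * ((x - α) ^ 2 / 2) : ℝ) : ℂ) * Complex.I := by
    push_cast
    field_simp
    rw [Complex.I_sq]
    ring
  have key := hbound (-(γ * r / (2 * π)))
  rw [abs_neg, abs_div, abs_mul, abs_of_pos hr, abs_of_pos (by positivity : 0 < 2 * π)] at key
  simp only [hphase]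
  rw [div_div, le_div_iff₀ (by positivity)]
  set N := ‖∫ x in a..b, Complex.sin (x + β) *
    Complex.exp (((-(γ * r / (2 * π)) * ((x - α) ^ 2 / 2) : ℝ) : ℂ) * Complex.I)‖
  calc N * (|γ| * r) = 2 * π * (|γ| * r / (2 * π) * N) := by field_simp
    _ ≤ 2 * π * C := by gcongr
    _ ≤ 2 * π * (C + 1) := by linarith [pi_pos]
end

section
/- With the continued-fraction data below, let r > 0 be a real number, and for 1 ≤ i ≤ k−1 and real x define x_i(x) = (−1)^{k−i} c_{i−1} ( x/q + (−1)^k ∑_{j=i}^{k−1} π/(c_{j−1} c_j) ). Then for every real x with −π + qπ/r < x < π − qπ/r and every i ∈ {1,…,k−1}, one has |x_i(x)| ≤ π − c_{i−1}π/r; in particular −π + π/r ≤ x_i(x) ≤ π − π/r. -/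
open Real

/-- The critical point function
`x_i(x) = (−1)^{k−i} c_{i−1} (x/q + (−1)^k ∑_{j=i}^{k−1} π/(c_{j−1} c_j))`. -/
noncomputable def xcrit (c : ℕ → ℤ) (q : ℤ) (k i : ℕ) (x : ℝ) : ℝ :=
  (-1 : ℝ) ^ (k - i) * (c (i - 1) : ℝ) *
    (x / (q : ℝ) + (-1 : ℝ) ^ k *
      ∑ j ∈ Finset.Icc i (k - 1), π / ((c (j - 1) : ℝ) * (c j : ℝ)))

/-!
Since `1 ≤ c_{j-1} < c_j`, each term `π/(c_{j-1} c_j)` is at most `π/c_{j-1} - π/c_j`, so the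
sum in `x_i(x)` telescopes to at most `π/c_{i-1} - π/q`. Together with `|x|/q < π/q - π/r` this
gives `|x_i(x)| ≤ c_{i-1} (π/c_{i-1} - π/r) = π - c_{i-1}π/r`.
-/

open Finset

theorem pos_and_lt_of_continuant_rec {a c : ℕ → ℤ} {n : ℕ}
    (ha : ∀ i, 1 ≤ i → i ≤ n → 2 ≤ a i) (hc0 : c 0 = 1) (hc1 : c 1 = a 1)
    (hcrec : ∀ i, 2 ≤ i → i ≤ n → c i = a i * c (i - 1) - c (i - 2)) {j : ℕ}
    (hj1 : 1 ≤ j) (hjn : j ≤ n) : 0 < c (j - 1) ∧ c (j - 1) < c j := by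
  obtain ⟨j, rfl⟩ : ∃ m, j = m + 1 := ⟨j - 1, by omega⟩
  rw [Nat.add_sub_cancel]
  induction j with
  | zero =>
    have := ha 1 le_rfl hjn
    simp only [hc0, zero_add, hc1]
    omega
  | succ j ih =>
    obtain ⟨hpos, hlt⟩ := ih (by omega) (by omega)
    have hrec : c (j + 2) = a (j + 2) * c (j + 1) - c j := hcrec (j + 2) (by omega) hjn
    have ha2 := ha (j + 2) (by omega) hjn
    refine ⟨by omega, ?_⟩
    rw [hrec]
    nlinarith

theorem div_mul_le_div_sub_div {t u v : ℝ} (ht : 0 ≤ t) (hu : 0 < u) (huv : u + 1 ≤ v) :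
    t / (u * v) ≤ t / u - t / v := by
  have hv : 0 < v := by linarith
  rw [div_sub_div _ _ hu.ne' hv.ne', mul_comm u v]
  gcongr
  nlinarith

theorem sum_Icc_div_mul_le_div_sub_div {d : ℕ → ℝ} {t : ℝ} (ht : 0 ≤ t) {i m : ℕ}
    (him : i ≤ m) (hd : ∀ j ∈ Icc i m, 0 < d (j - 1) ∧ d (j - 1) + 1 ≤ d j) :
    ∑ j ∈ Icc i m, t / (d (j - 1) * d j) ≤ t / d (i - 1) - t / d m := by
  calc ∑ j ∈ Icc i m, t / (d (j - 1) * d j)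
      ≤ ∑ j ∈ Icc i m, (t / d (j - 1) - t / d j) :=
        sum_le_sum fun j hj ↦ div_mul_le_div_sub_div ht (hd j hj).1 (hd j hj).2
    _ = ∑ j ∈ Icc i m, (-(t / d (j + 1 - 1)) - -(t / d (j - 1))) := by
        simp only [Nat.add_sub_cancel, sub_neg_eq_add, neg_add_eq_sub]
    _ = t / d (i - 1) - t / d m := by
        rw [sum_Icc_sub him fun j ↦ -(t / d (j - 1)), Nat.add_sub_cancel]
        ring

theorem abs_sign_mul_add_le {σ τ C q S x b r : ℝ} (hσ : |σ| = 1) (hτ : |τ| = 1)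
    (hC : 0 < C) (hq : 0 < q) (hS0 : 0 ≤ S) (hS : S ≤ b / C - b / q)
    (hx : |x| ≤ b - q * b / r) :
    |σ * C * (x / q + τ * S)| ≤ b - C * b / r :=
  calc |σ * C * (x / q + τ * S)| = C * |x / q + τ * S| := by
        rw [abs_mul, abs_mul, hσ, one_mul, abs_of_pos hC]
    _ ≤ C * (|x| / q + S) := by
        gcongr
        calc |x / q + τ * S| ≤ |x / q| + |τ * S| := abs_add_le _ _
          _ = |x| / q + S := by
              rw [abs_div, abs_of_pos hq, abs_mul, hτ, one_mul, abs_of_nonneg hS0]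
    _ ≤ C * ((b - q * b / r) / q + (b / C - b / q)) := by gcongr
    _ = b - C * b / r := by field_simp; ring

theorem xcrit_bound_general (k : ℕ) (a c : ℕ → ℤ)
    (ha : ∀ i, 1 ≤ i → i ≤ k - 1 → 2 ≤ a i)
    (hc0 : c 0 = 1) (hc1 : c 1 = a 1)
    (hcrec : ∀ i, 2 ≤ i → i ≤ k - 1 → c i = a i * c (i - 1) - c (i - 2))
    (q : ℤ) (hq : q = c (k - 1))
    (r : ℝ) (hr : 0 < r) (x : ℝ)
    (hx1 : -π + (q : ℝ) * π / r < x) (hx2 : x < π - (q : ℝ) * π / r)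
    (i : ℕ) (hi1 : 1 ≤ i) (hi2 : i ≤ k - 1) :
    |xcrit c q k i x| ≤ π - (c (i - 1) : ℝ) * π / r ∧
      -π + π / r ≤ xcrit c q k i x ∧ xcrit c q k i x ≤ π - π / r := by
  have hc : ∀ j ∈ Icc i (k - 1), 0 < c (j - 1) ∧ c (j - 1) < c j := fun j hj ↦
    pos_and_lt_of_continuant_rec ha hc0 hc1 hcrec (hi1.trans (mem_Icc.1 hj).1) (mem_Icc.1 hj).2
  have hstep : ∀ j ∈ Icc i (k - 1), 0 < (c (j - 1) : ℝ) ∧ (c (j - 1) : ℝ) + 1 ≤ c j :=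
    fun j hj ↦ ⟨by exact_mod_cast (hc j hj).1, by exact_mod_cast (hc j hj).2⟩
  have hC1 : (1 : ℝ) ≤ c (i - 1) := by exact_mod_cast (hc i (left_mem_Icc.2 hi2)).1
  have hqpos : (0 : ℝ) < q := by
    obtain ⟨h0, h1⟩ := hc (k - 1) (right_mem_Icc.2 hi2)
    rw [hq]
    exact_mod_cast h0.trans h1
  have hS0 : 0 ≤ ∑ j ∈ Icc i (k - 1), π / ((c (j - 1) : ℝ) * (c j : ℝ)) :=
    sum_nonneg fun j hj ↦
      div_nonneg pi_pos.le (mul_pos (hstep j hj).1 (by linarith [hstep j hj])).le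
  have hbound : |xcrit c q k i x| ≤ π - (c (i - 1) : ℝ) * π / r := by
    refine abs_sign_mul_add_le (by simp) (by simp) (by linarith) hqpos hS0 ?_
      (abs_le.2 ⟨by linarith, hx2.le⟩)
    rw [hq]
    exact sum_Icc_div_mul_le_div_sub_div (d := fun j ↦ (c j : ℝ)) pi_pos.le hi2 hstep
  have hπr : π / r ≤ (c (i - 1) : ℝ) * π / r := by
    rw [mul_div_assoc]
    exact le_mul_of_one_le_left (div_pos pi_pos hr).le hC1
  obtain ⟨hlo, hhi⟩ := abs_le.1 hbound
  exact ⟨hbound, by linarith, by linarith⟩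

/-- **Lemma 4.4 of the paper.** With the continued-fraction data, for `r > 0`,
`−π + qπ/r < x < π − qπ/r` and `1 ≤ i ≤ k−1`, one has `|x_i(x)| ≤ π − c_{i−1}π/r`;
in particular `−π + π/r ≤ x_i(x) ≤ π − π/r`. -/
theorem xcrit_bound (k : ℕ) (hk : 2 ≤ k) (a c : ℕ → ℤ)
    (ha : ∀ i, 1 ≤ i → i ≤ k - 1 → 2 ≤ a i)
    (hc0 : c 0 = 1) (hc1 : c 1 = a 1)
    (hcrec : ∀ i, 2 ≤ i → i ≤ k - 1 → c i = a i * c (i - 1) - c (i - 2))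
    (q : ℤ) (hq : q = c (k - 1))
    (r : ℝ) (hr : 0 < r) (x : ℝ)
    (hx1 : -π + (q : ℝ) * π / r < x) (hx2 : x < π - (q : ℝ) * π / r)
    (i : ℕ) (hi1 : 1 ≤ i) (hi2 : i ≤ k - 1) :
    |xcrit c q k i x| ≤ π - (c (i - 1) : ℝ) * π / r ∧
      -π + π / r ≤ xcrit c q k i x ∧ xcrit c q k i x ≤ π - π / r :=
  xcrit_bound_general k a c ha hc0 hc1 hcrec q hq r hr x hx1 hx2 i hi1 hi2
end

section
/- Let p, q be integers with q ≠ 0, and let (x,y) ∈ D_ℂ. Define (with log the principal branch of the complex logarithm) LA = 2i(y+x), LA″ = log(1 − e^{−2i(y+x)}), LB = 2i(y−x), LB′ = −log(1 − e^{2i(y−x)}), LB″ = πi − 2i(y−x) + log(1 − e^{2i(y−x)}). Then the following two systems of equations are equivalent: (I) the critical point equations of V⁺: 4x − 2i log(1 − e^{−2i(y+x)}) − 2i log(1 − e^{2i(y−x)}) = 0 and (−2px + 2π)/q + 4y − 2π − 2i log(1 − e^{−2i(y+x)}) + 2i log(1 − e^{2i(y−x)}) = 0; (II) the hyperbolic gluing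 equations: LA + 2LA″ + LB + 2LB″ = 2πi and p(LB′ − LA″) + q(2πi − 2LA − 4LA″) = 2πi. -/
/-!
Once the two logarithms `log (1 - e^{-2i(y+x)})` and `log (1 - e^{2i(y-x)})` are named `a` and `b`,
both systems are linear in `x, y, a, b`. The edge equation is `4ix + 2a + 2b = 0`, i.e. `i` times
the first critical equation. Modulo that equation, `i` times the Dehn-filling equation is the
second critical equation multiplied by `q`, which is where `q ≠ 0` enters.
-/

open Real Complex

section GluingAlgebra

variable (x y a b : ℂ)

theorem edge_eqn_iff_first_critical_eqn :
    2 * I * (y + x) + 2 * a + 2 * I * (y - x) + 2 * (π * I - 2 * I * (y - x) + b)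
        = 2 * π * I ↔
      4 * x - 2 * I * a - 2 * I * b = 0 := by
  constructor
  · intro h
    linear_combination (-I) * h + (4 * x) * I_sq
  · intro h
    linear_combination I * h + (2 * a + 2 * b) * I_sq

theorem filling_eqn_iff_second_critical_eqn {p q : ℂ} (hq : q ≠ 0)
    (hcrit : 4 * x - 2 * I * a - 2 * I * b = 0) :
    p * (-b - a) + q * (2 * π * I - 2 * (2 * I * (y + x)) - 4 * a) = 2 * π * I ↔
      (-2 * p * x + 2 * π) / q + 4 * y - 2 * π - 2 * I * a + 2 * I * b = 0 := by
  have cleared : ((-2 * p * x + 2 * π) / q + 4 * y - 2 * π - 2 * I * a + 2 * I * b) * q =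
      -2 * p * x + 2 * π + q * (4 * y - 2 * π - 2 * I * a + 2 * I * b) := by
    field_simp
    ring
  rw [← mul_eq_zero_iff_right hq, cleared]
  constructor
  · intro h
    linear_combination I * h - (p / 2 + q) * hcrit + (4 * q * (y + x) + 2 * π - 2 * π * q) * I_sq
  · intro h
    linear_combination (-I) * h + (-I) * (p / 2 + q) * hcrit - (p * (a + b) + 4 * q * a) * I_sq

end GluingAlgebra

theorem critical_eqns_iff_gluing_eqns_plus_general (p q : ℤ) (hq : q ≠ 0) (x y : ℂ) :
    (4 * x - 2 * Complex.I * Complex.log (1 - Complex.exp (-2 * Complex.I * (y + x)))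
        - 2 * Complex.I * Complex.log (1 - Complex.exp (2 * Complex.I * (y - x))) = 0 ∧
      (-2 * (p : ℂ) * x + 2 * (π : ℂ)) / (q : ℂ) + 4 * y - 2 * (π : ℂ)
        - 2 * Complex.I * Complex.log (1 - Complex.exp (-2 * Complex.I * (y + x)))
        + 2 * Complex.I * Complex.log (1 - Complex.exp (2 * Complex.I * (y - x))) = 0)
    ↔
    (2 * Complex.I * (y + x)
        + 2 * Complex.log (1 - Complex.exp (-2 * Complex.I * (y + x)))
        + 2 * Complex.I * (y - x)
        + 2 * ((π : ℂ) * Complex.I - 2 * Complex.I * (y - x)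
            + Complex.log (1 - Complex.exp (2 * Complex.I * (y - x))))
        = 2 * (π : ℂ) * Complex.I ∧
      (p : ℂ) * (-Complex.log (1 - Complex.exp (2 * Complex.I * (y - x)))
          - Complex.log (1 - Complex.exp (-2 * Complex.I * (y + x))))
        + (q : ℂ) * (2 * (π : ℂ) * Complex.I - 2 * (2 * Complex.I * (y + x))
            - 4 * Complex.log (1 - Complex.exp (-2 * Complex.I * (y + x))))
        = 2 * (π : ℂ) * Complex.I) := by
  have hq' : (q : ℂ) ≠ 0 := Int.cast_ne_zero.mpr hq
  refine (and_congr_right fun hcrit => ?_).trans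
    (and_congr_left' (edge_eqn_iff_first_critical_eqn x y _ _).symm)
  exact (filling_eqn_iff_second_critical_eqn x y _ _ hq' hcrit).symm

/-- **Lemma 5.1 of the paper.** In `D_ℂ`, with shape parameters `A = e^{2i(y+x)}`,
`B = e^{2i(y−x)}` and logarithms `LA = 2i(y+x)`, `LA″ = log(1 − e^{−2i(y+x)})`,
`LB = 2i(y−x)`, `LB′ = −log(1 − e^{2i(y−x)})`, `LB″ = πi − 2i(y−x) + log(1 − e^{2i(y−x)})`,
the critical point equations of `V⁺` are equivalent to the hyperbolic gluing equations
(the edge equation and the `p/q` Dehn-filling equation). -/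
theorem critical_eqns_iff_gluing_eqns_plus (p q : ℤ) (hq : q ≠ 0) (x y : ℂ)
    (h1 : 0 < (y + x).re) (h2 : (y + x).re < π / 2)
    (h3 : 0 < (y - x).re) (h4 : (y - x).re < π / 2) :
    (4 * x - 2 * Complex.I * Complex.log (1 - Complex.exp (-2 * Complex.I * (y + x)))
        - 2 * Complex.I * Complex.log (1 - Complex.exp (2 * Complex.I * (y - x))) = 0 ∧
      (-2 * (p : ℂ) * x + 2 * (π : ℂ)) / (q : ℂ) + 4 * y - 2 * (π : ℂ)
        - 2 * Complex.I * Complex.log (1 - Complex.exp (-2 * Complex.I * (y + x)))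
        + 2 * Complex.I * Complex.log (1 - Complex.exp (2 * Complex.I * (y - x))) = 0)
    ↔
    (2 * Complex.I * (y + x)
        + 2 * Complex.log (1 - Complex.exp (-2 * Complex.I * (y + x)))
        + 2 * Complex.I * (y - x)
        + 2 * ((π : ℂ) * Complex.I - 2 * Complex.I * (y - x)
            + Complex.log (1 - Complex.exp (2 * Complex.I * (y - x))))
        = 2 * (π : ℂ) * Complex.I ∧
      (p : ℂ) * (-Complex.log (1 - Complex.exp (2 * Complex.I * (y - x)))
          - Complex.log (1 - Complex.exp (-2 * Complex.I * (y + x))))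
        + (q : ℂ) * (2 * (π : ℂ) * Complex.I - 2 * (2 * Complex.I * (y + x))
            - 4 * Complex.log (1 - Complex.exp (-2 * Complex.I * (y + x))))
        = 2 * (π : ℂ) * Complex.I) :=
  critical_eqns_iff_gluing_eqns_plus_general p q hq x y
end

section
/- Let p, q be integers with q ≠ 0, and define on D_ℂ the holomorphic function V(x,y) = (−p/q − 2)x² + 2πx/q − 2y² + 2πy − 5π²/6 + Li₂(e^{2i(y+x)}) + Li₂(e^{2i(y−x)}). Let Ω = {(u,v) ∈ ℝ² : 0 < v+u < π/2 and 0 < v−u < π/2}. Then: (1) for every fixed (s,t) ∈ ℝ², the function (u,v) ↦ Im V(u+is, v+it) is strictly concave on the open convex set Ω; (2) for every fixed (u,v) ∈ Ω, the function (s,t) ↦ Im V(u+is, v+it) is strictly convex on ℝ². -/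
open Real MeasureTheory

/-- The dilogarithm `Li₂(w) = −∫₀¹ log(1 − t w)/t dt` for `w ∈ ℂ \ [1,∞)`,
with `log` the principal branch of the complex logarithm. -/
noncomputable def Li2 (w : ℂ) : ℂ :=
  -∫ t : ℝ in (0:ℝ)..1, Complex.log (1 - t * w) / t

/-- The potential function
`V(x,y) = (−p/q − 2)x² + 2πx/q − 2y² + 2πy − 5π²/6 + Li₂(e^{2i(y+x)}) + Li₂(e^{2i(y−x)})`. -/
noncomputable def Vpot (p q : ℤ) (x y : ℂ) : ℂ :=
  (-(p : ℂ) / (q : ℂ) - 2) * x ^ 2 + 2 * (π : ℂ) * x / (q : ℂ) - 2 * y ^ 2 +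
    2 * (π : ℂ) * y - 5 * (π : ℂ) ^ 2 / 6 +
    Li2 (Complex.exp (2 * Complex.I * (y + x))) +
    Li2 (Complex.exp (2 * Complex.I * (y - x)))

/-!
With `F(z) = Li₂(e^{2iz})`, the function `Im V(u+is, v+it)` equals
`Im F((v+u) + i(t+s)) + Im F((v−u) + i(t−s))` plus a term that is affine in `(u,v)` for fixed
`(s,t)` and affine in `(s,t)` for fixed `(u,v)`. Differentiating under the integral sign gives
`Li₂'(w) = −log(1−w)/w`, hence `F''(z) = −4w/(1−w)` with `w = e^{2iz}`; for `0 < Re z < π/2` we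
have `Im w > 0` and so `Im (w/(1−w)) = Im w/|1−w|² > 0`. Along a horizontal line the second
derivative of `Im F` is `Im F'' < 0`, along a vertical line it is `−Im F'' > 0`, and strictness
survives the injective change of variables `(u,v) ↦ (v+u, v−u)`.
-/

open Complex ComplexConjugate Set Filter Topology

lemma hasDerivAt_im_mul_comp_line {G : ℂ → ℂ} {G' a c d : ℂ} {x : ℝ}
    (h : HasDerivAt G G' (a + d * x)) :
    HasDerivAt (fun y : ℝ => (c * G (a + d * y)).im) (c * d * G').im x := by
  have hline : HasDerivAt (fun z : ℂ => a + d * z) d x := by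
    simpa using ((hasDerivAt_id (x : ℂ)).const_mul d).const_add a
  have := ((h.comp (x : ℂ) hline).const_mul c).comp_ofReal
  simpa [Function.comp_def, mul_assoc, mul_comm G' d] using
    imCLM.hasFDerivAt.comp_hasDerivAt x this

theorem strictConvexOn_im_comp_line {F F' F'' : ℂ → ℂ} {S : Set ℝ} (hS : IsOpen S)
    (hSc : Convex ℝ S) {a d : ℂ}
    (hF : ∀ x ∈ S, HasDerivAt F (F' (a + d * x)) (a + d * x))
    (hF' : ∀ x ∈ S, HasDerivAt F' (F'' (a + d * x)) (a + d * x))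
    (hpos : ∀ x ∈ S, 0 < (d ^ 2 * F'' (a + d * x)).im) :
    StrictConvexOn ℝ S fun x : ℝ => (F (a + d * x)).im := by
  have h₁ : ∀ x ∈ S, HasDerivAt (fun y : ℝ => (F (a + d * y)).im) (d * F' (a + d * x)).im x :=
    fun x hx => by simpa using hasDerivAt_im_mul_comp_line (c := 1) (hF x hx)
  refine strictConvexOn_of_deriv2_pos' hSc
    (fun x hx => (h₁ x hx).continuousAt.continuousWithinAt) fun x hx => ?_
  have hderiv : deriv (fun y : ℝ => (F (a + d * y)).im) =ᶠ[𝓝 x]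
      fun y => (d * F' (a + d * y)).im :=
    eventually_of_mem (hS.mem_nhds hx) fun y hy => (h₁ y hy).deriv
  rw [Function.iterate_succ_apply', Function.iterate_one, hderiv.deriv_eq,
    (hasDerivAt_im_mul_comp_line (hF' x hx)).deriv, ← sq]
  exact hpos x hx

theorem strictConcaveOn_im_comp_line {F F' F'' : ℂ → ℂ} {S : Set ℝ} (hS : IsOpen S)
    (hSc : Convex ℝ S) {a d : ℂ}
    (hF : ∀ x ∈ S, HasDerivAt F (F' (a + d * x)) (a + d * x))
    (hF' : ∀ x ∈ S, HasDerivAt F' (F'' (a + d * x)) (a + d * x))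
    (hneg : ∀ x ∈ S, (d ^ 2 * F'' (a + d * x)).im < 0) :
    StrictConcaveOn ℝ S fun x : ℝ => (F (a + d * x)).im := by
  refine neg_strictConvexOn_iff.1 <| (strictConvexOn_im_comp_line (F := -F) (F' := -F')
    (F'' := -F'') hS hSc (fun x hx => (hF x hx).neg) (fun x hx => (hF' x hx).neg)
    fun x hx => ?_).congr fun x _ => by simp
  simpa only [Pi.neg_apply, mul_neg, neg_im, neg_pos] using hneg x hx

theorem StrictConvexOn.add_comp_linearMap {E F₁ F₂ : Type*} [AddCommGroup E] [Module ℝ E]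
    [AddCommGroup F₁] [Module ℝ F₁] [AddCommGroup F₂] [Module ℝ F₂] {f₁ : F₁ → ℝ} {f₂ : F₂ → ℝ}
    {t₁ : Set F₁} {t₂ : Set F₂} (hf₁ : StrictConvexOn ℝ t₁ f₁) (hf₂ : StrictConvexOn ℝ t₂ f₂)
    {ℓ₁ : E →ₗ[ℝ] F₁} {ℓ₂ : E →ₗ[ℝ] F₂} (hℓ : Function.Injective (ℓ₁.prod ℓ₂)) :
    StrictConvexOn ℝ (ℓ₁ ⁻¹' t₁ ∩ ℓ₂ ⁻¹' t₂) fun x => f₁ (ℓ₁ x) + f₂ (ℓ₂ x) := by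
  refine ⟨(hf₁.1.linear_preimage ℓ₁).inter (hf₂.1.linear_preimage ℓ₂), ?_⟩
  rintro x ⟨hx₁, hx₂⟩ y ⟨hy₁, hy₂⟩ hxy a b ha hb hab
  simp only [map_add, map_smul, smul_add]
  by_cases h₁ : ℓ₁ x = ℓ₁ y
  · have h₂ : ℓ₂ x ≠ ℓ₂ y := fun h₂ => hxy (hℓ (Prod.ext h₁ h₂))
    linarith [hf₁.convexOn.2 hx₁ hy₁ ha.le hb.le hab, hf₂.2 hx₂ hy₂ h₂ ha hb hab]
  · linarith [hf₁.2 hx₁ hy₁ h₁ ha hb hab, hf₂.convexOn.2 hx₂ hy₂ ha.le hb.le hab]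

theorem StrictConvexOn.affine_add_comp_add_sub {f₁ f₂ : ℝ → ℝ} {t₁ t₂ : Set ℝ}
    (hf₁ : StrictConvexOn ℝ t₁ f₁) (hf₂ : StrictConvexOn ℝ t₂ f₂) (a b c : ℝ) :
    StrictConvexOn ℝ {x : ℝ × ℝ | x.2 + x.1 ∈ t₁ ∧ x.2 - x.1 ∈ t₂}
      fun x => a * x.1 + b * x.2 + c + f₁ (x.2 + x.1) + f₂ (x.2 - x.1) := by
  let σ : ℝ × ℝ →ₗ[ℝ] ℝ := .snd ℝ ℝ ℝ + .fst ℝ ℝ ℝ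
  let δ : ℝ × ℝ →ₗ[ℝ] ℝ := .snd ℝ ℝ ℝ - .fst ℝ ℝ ℝ
  have hσδ : Function.Injective (σ.prod δ) := fun x y h => by
    simp only [LinearMap.prod_apply, Function.prod_apply, LinearMap.add_apply, LinearMap.sub_apply,
      LinearMap.fst_apply, LinearMap.snd_apply, Prod.ext_iff, σ, δ] at h
    ext <;> linarith
  have h := hf₁.add_comp_linearMap hf₂ hσδ
  have hlin := (a • LinearMap.fst ℝ ℝ ℝ + b • .snd ℝ ℝ ℝ).convexOn h.1
  refine ((hlin.add_strictConvexOn h).add_const c).congr fun x _ => ?_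
  simp only [Pi.add_apply, LinearMap.add_apply, LinearMap.sub_apply, LinearMap.smul_apply,
    LinearMap.fst_apply, LinearMap.snd_apply, smul_eq_mul, σ, δ]
  ring

theorem StrictConcaveOn.affine_add_comp_add_sub {f₁ f₂ : ℝ → ℝ} {t₁ t₂ : Set ℝ}
    (hf₁ : StrictConcaveOn ℝ t₁ f₁) (hf₂ : StrictConcaveOn ℝ t₂ f₂) (a b c : ℝ) :
    StrictConcaveOn ℝ {x : ℝ × ℝ | x.2 + x.1 ∈ t₁ ∧ x.2 - x.1 ∈ t₂}
      fun x => a * x.1 + b * x.2 + c + f₁ (x.2 + x.1) + f₂ (x.2 - x.1) := by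
  refine neg_strictConvexOn_iff.1 <| ((neg_strictConvexOn_iff.2 hf₁).affine_add_comp_add_sub
    (neg_strictConvexOn_iff.2 hf₂) (-a) (-b) (-c)).congr fun x _ => ?_
  simp only [Pi.neg_apply]
  ring

section Dilog

variable {w : ℂ}

lemma one_sub_ofReal_mul_mem_slitPlane (hw : w.im ≠ 0) (t : ℝ) : 1 - t * w ∈ slitPlane := by
  rcases eq_or_ne t 0 with rfl | ht
  · simp
  · refine mem_slitPlane_iff.2 (Or.inr ?_)
    simpa using And.intro ht hw

lemma hasDerivAt_log_one_sub_ofReal_mul (hw : w.im ≠ 0) (t : ℝ) :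
    HasDerivAt (fun τ : ℝ => log (1 - τ * w)) (-w / (1 - t * w)) t := by
  simpa using (((hasDerivAt_id t).ofReal_comp.mul_const w).const_sub 1).clog_real
    (one_sub_ofReal_mul_mem_slitPlane hw t)

lemma abs_im_le_norm_mul_norm_one_sub (x : ℂ) (t : ℝ) : |x.im| ≤ ‖x‖ * ‖1 - t * x‖ := by
  have h : (conj x * (1 - t * x)).im = -x.im := by
    simp only [mul_im, sub_re, sub_im, one_re, one_im, conj_re, conj_im, mul_re, ofReal_re,
      ofReal_im]
    ring
  calc |x.im| = |(conj x * (1 - t * x)).im| := by rw [h, abs_neg]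
    _ ≤ ‖conj x * (1 - t * x)‖ := abs_im_le_norm _
    _ = ‖x‖ * ‖1 - t * x‖ := by rw [norm_mul, RCLike.norm_conj]

lemma intervalIntegrable_log_one_sub_ofReal_mul_div (hw : w.im ≠ 0) :
    IntervalIntegrable (fun t : ℝ => log (1 - t * w) / t) volume 0 1 := by
  -- the integrand is the slope of `τ ↦ log (1 - τ w)` at `0`, which extends continuously to `0`
  have hc : Continuous (dslope (fun τ : ℝ => log (1 - τ * w)) 0) :=
    continuousOn_univ.1 <| (continuousOn_dslope Filter.univ_mem).2
      ⟨fun t _ => (hasDerivAt_log_one_sub_ofReal_mul hw t).continuousAt.continuousWithinAt,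
        (hasDerivAt_log_one_sub_ofReal_mul hw 0).differentiableAt⟩
  refine (hc.intervalIntegrable 0 1).congr fun t ht => ?_
  have : t ≠ 0 := (uIoc_of_le (zero_le_one' ℝ) ▸ ht).1.ne'
  simp [dslope_of_ne _ this, slope_def_module, div_eq_inv_mul]

lemma integral_inv_one_sub_ofReal_mul (hw : w.im ≠ 0) :
    ∫ t : ℝ in (0 : ℝ)..1, (1 - t * w)⁻¹ = -log (1 - w) / w := by
  have hw0 : w ≠ 0 := fun h => hw (by simp [h])
  have hne : ∀ t : ℝ, 1 - t * w ≠ 0 := fun t =>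
    slitPlane_ne_zero (one_sub_ofReal_mul_mem_slitPlane hw t)
  rw [intervalIntegral.integral_eq_sub_of_hasDerivAt (f := fun τ : ℝ => -log (1 - τ * w) / w)]
  · simp
  · intro t _
    refine ((hasDerivAt_log_one_sub_ofReal_mul hw t).fun_neg.div_const w).congr_deriv ?_
    field_simp [hne t]
  · exact (continuous_const.sub (continuous_ofReal.mul continuous_const)).inv₀ hne
      |>.intervalIntegrable 0 1

lemma norm_inv_one_sub_ofReal_mul_le {x : ℂ} (hx : x.im ≠ 0) (t : ℝ) :
    ‖(1 - t * x)⁻¹‖ ≤ ‖x‖ / |x.im| := by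
  have hpos : 0 < ‖1 - t * x‖ :=
    norm_pos_iff.2 <| slitPlane_ne_zero <| one_sub_ofReal_mul_mem_slitPlane hx t
  rw [norm_inv, le_div_iff₀ (abs_pos.2 hx), inv_mul_le_iff₀ hpos]
  exact mul_comm ‖x‖ _ ▸ abs_im_le_norm_mul_norm_one_sub x t

lemma hasDerivAt_log_one_sub_ofReal_mul_div {x : ℂ} (hx : x.im ≠ 0) {t : ℝ} (ht : t ≠ 0) :
    HasDerivAt (fun x => Complex.log (1 - t * x) / t) (-(1 - t * x)⁻¹) x := by
  have hslit := one_sub_ofReal_mul_mem_slitPlane hx t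
  refine ((((hasDerivAt_id x).const_mul (t : ℂ)).const_sub 1).clog hslit).div_const (t : ℂ)
    |>.congr_deriv ?_
  field_simp [slitPlane_ne_zero hslit, ofReal_ne_zero.2 ht]
  simp

theorem hasDerivAt_Li2 (hw : w.im ≠ 0) : HasDerivAt Li2 (-log (1 - w) / w) w := by
  set r := |w.im| / 2 with hr_def
  have hr : 0 < r := by positivity
  have hball : ∀ x ∈ Metric.ball w r, r ≤ |x.im| ∧ ‖x‖ ≤ ‖w‖ + r := fun x hx => by
    rw [Metric.mem_ball, Complex.dist_eq] at hx
    have := (abs_sub_abs_le_abs_sub w.im x.im).trans (sub_im w x ▸ abs_im_le_norm (w - x))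
    constructor <;> linarith [norm_le_norm_add_norm_sub' x w, norm_sub_rev x w]
  obtain ⟨-, hderiv⟩ := intervalIntegral.hasDerivAt_integral_of_dominated_loc_of_deriv_le
    (F := fun x (t : ℝ) => Complex.log (1 - t * x) / t) (F' := fun x t => -(1 - t * x)⁻¹)
    (bound := fun _ => (‖w‖ + r) / r) (Metric.ball_mem_nhds w hr)
    (Eventually.of_forall fun x => (by fun_prop : Measurable _).aestronglyMeasurable)
    (intervalIntegrable_log_one_sub_ofReal_mul_div hw)
    (by fun_prop : Measurable fun t : ℝ => -(1 - t * w)⁻¹).aestronglyMeasurable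
    (Eventually.of_forall fun t _ x hx =>
      (norm_neg _).trans_le <| (norm_inv_one_sub_ofReal_mul_le
        (abs_pos.1 (hr.trans_le (hball x hx).1)) t).trans <|
          div_le_div₀ (by positivity) (hball x hx).2 hr (hball x hx).1)
    intervalIntegrable_const
    (Eventually.of_forall fun t ht x hx => hasDerivAt_log_one_sub_ofReal_mul_div
      (abs_pos.1 (hr.trans_le (hball x hx).1)) (uIoc_of_le (zero_le_one' ℝ) ▸ ht).1.ne')
  have := hderiv.fun_neg
  rwa [intervalIntegral.integral_neg, neg_neg, integral_inv_one_sub_ofReal_mul hw] at this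

end Dilog

noncomputable def Li2Exp (z : ℂ) : ℂ := Li2 (cexp (2 * I * z))

lemma im_cexp_two_mul_I_mul_pos {z : ℂ} (h₀ : 0 < z.re) (h₁ : z.re < π / 2) :
    0 < (cexp (2 * I * z)).im := by
  simpa [exp_im, mul_re, mul_im] using
    mul_pos (Real.exp_pos _) (Real.sin_pos_of_pos_of_lt_pi (by linarith : 0 < 2 * z.re)
      (by linarith))

lemma im_four_mul_div_one_sub_pos {w : ℂ} (hw : 0 < w.im) : 0 < (4 * w / (1 - w)).im := by
  have hne : 1 - w ≠ 0 := fun h => by simp [← sub_eq_zero.1 h] at hw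
  have him : (4 * w / (1 - w)).im = 4 * w.im / normSq (1 - w) := by
    simp only [div_im, mul_re, mul_im, sub_re, sub_im, one_re, one_im, re_ofNat, im_ofNat]
    ring
  rw [him]
  exact div_pos (by positivity) (normSq_pos.2 hne)

lemma hasDerivAt_cexp_two_mul_I_mul (z : ℂ) :
    HasDerivAt (fun z => cexp (2 * I * z)) (cexp (2 * I * z) * (2 * I)) z := by
  simpa using ((hasDerivAt_id z).const_mul (2 * I)).cexp

theorem hasDerivAt_Li2Exp {z : ℂ} (hz : (cexp (2 * I * z)).im ≠ 0) :
    HasDerivAt Li2Exp (-2 * I * Complex.log (1 - cexp (2 * I * z))) z := by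
  refine ((hasDerivAt_Li2 hz).comp z (hasDerivAt_cexp_two_mul_I_mul z)).congr_deriv ?_
  field_simp [Complex.exp_ne_zero]

theorem hasDerivAt_log_one_sub_cexp {z : ℂ} (hz : (cexp (2 * I * z)).im ≠ 0) :
    HasDerivAt (fun z => -2 * I * Complex.log (1 - cexp (2 * I * z)))
      (-4 * cexp (2 * I * z) / (1 - cexp (2 * I * z))) z := by
  have hslit : 1 - cexp (2 * I * z) ∈ slitPlane :=
    mem_slitPlane_iff.2 <| Or.inr <| by simpa using hz
  refine ((((hasDerivAt_cexp_two_mul_I_mul z).const_sub 1).clog hslit).const_mul (-2 * I))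
    |>.congr_deriv ?_
  field_simp [slitPlane_ne_zero hslit]
  linear_combination 4 * I_sq

theorem strictConcaveOn_im_Li2Exp_re (c : ℝ) :
    StrictConcaveOn ℝ (Ioo 0 (π / 2)) fun x : ℝ => (Li2Exp (x + I * c)).im := by
  have hpos : ∀ x ∈ Ioo 0 (π / 2), 0 < (cexp (2 * I * (I * c + 1 * x))).im := fun x hx =>
    im_cexp_two_mul_I_mul_pos (by simpa using hx.1) (by simpa using hx.2)
  refine (strictConcaveOn_im_comp_line (F' := fun z => -2 * I * Complex.log (1 - cexp (2 * I * z)))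
    (F'' := fun z => -4 * cexp (2 * I * z) / (1 - cexp (2 * I * z))) isOpen_Ioo (convex_Ioo _ _)
    (fun x hx => hasDerivAt_Li2Exp (hpos x hx).ne')
    (fun x hx => hasDerivAt_log_one_sub_cexp (hpos x hx).ne') fun x hx => ?_).congr
    fun x _ => by simp [add_comm]
  simpa [neg_div] using im_four_mul_div_one_sub_pos (hpos x hx)

theorem strictConvexOn_im_Li2Exp_im {c : ℝ} (h₀ : 0 < c) (h₁ : c < π / 2) :
    StrictConvexOn ℝ univ fun y : ℝ => (Li2Exp (c + I * y)).im := by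
  have hpos : ∀ y : ℝ, 0 < (cexp (2 * I * (c + I * y))).im := fun y =>
    im_cexp_two_mul_I_mul_pos (by simpa using h₀) (by simpa using h₁)
  refine strictConvexOn_im_comp_line (F' := fun z => -2 * I * Complex.log (1 - cexp (2 * I * z)))
    (F'' := fun z => -4 * cexp (2 * I * z) / (1 - cexp (2 * I * z))) isOpen_univ convex_univ
    (fun y _ => hasDerivAt_Li2Exp (hpos y).ne')
    (fun y _ => hasDerivAt_log_one_sub_cexp (hpos y).ne') fun y _ => ?_
  simpa [neg_div] using im_four_mul_div_one_sub_pos (hpos y)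

theorem im_Vpot (p q : ℤ) (u v s t : ℝ) :
    (Vpot p q (u + I * s) (v + I * t)).im =
      2 * (-p / q - 2) * s * u + 2 * π * s / q - 4 * t * v + 2 * π * t +
        (Li2Exp (↑(v + u) + I * ↑(t + s))).im + (Li2Exp (↑(v - u) + I * ↑(t - s))).im := by
  have hcoef : (-(p : ℂ) / q - 2) = ((-p / q - 2 : ℝ) : ℂ) := by push_cast; ring
  have hlin : 2 * (π : ℂ) * (u + I * s) / q = ((2 * π / q : ℝ) : ℂ) * (u + I * s) := by
    push_cast; ring
  have hsum : (v + I * t : ℂ) + (u + I * s) = ↑(v + u) + I * ↑(t + s) := by push_cast; ring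
  have hdiff : (v + I * t : ℂ) - (u + I * s) = ↑(v - u) + I * ↑(t - s) := by push_cast; ring
  rw [Vpot, hcoef, hlin, hsum, hdiff]
  simp only [Li2Exp, add_im, sub_im, mul_im, mul_re, ofReal_re, ofReal_im, I_re, I_im, add_re,
    pow_two, re_ofNat, im_ofNat, div_ofNat_im]
  ring

theorem ImV_concave_convex_general (p q : ℤ) :
    (∀ s t : ℝ, StrictConcaveOn ℝ
        {uv : ℝ × ℝ | 0 < uv.2 + uv.1 ∧ uv.2 + uv.1 < π / 2 ∧
          0 < uv.2 - uv.1 ∧ uv.2 - uv.1 < π / 2}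
        (fun uv : ℝ × ℝ =>
          (Vpot p q ((uv.1 : ℂ) + Complex.I * (s : ℂ))
            ((uv.2 : ℂ) + Complex.I * (t : ℂ))).im)) ∧
    (∀ u v : ℝ, 0 < v + u → v + u < π / 2 → 0 < v - u → v - u < π / 2 →
      StrictConvexOn ℝ Set.univ
        (fun st : ℝ × ℝ =>
          (Vpot p q ((u : ℂ) + Complex.I * (st.1 : ℂ))
            ((v : ℂ) + Complex.I * (st.2 : ℂ))).im)) := by
  refine ⟨fun s t => ?_, fun u v h₁ h₂ h₃ h₄ => ?_⟩
  · have h := (strictConcaveOn_im_Li2Exp_re (t + s)).affine_add_comp_add_sub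
      (strictConcaveOn_im_Li2Exp_re (t - s)) (2 * (-p / q - 2) * s) (-4 * t)
      (2 * π * s / q + 2 * π * t)
    simp only [mem_Ioo, and_assoc] at h
    exact h.congr fun uv _ => by rw [im_Vpot]; ring
  · have h := (strictConvexOn_im_Li2Exp_im h₁ h₂).affine_add_comp_add_sub
      (strictConvexOn_im_Li2Exp_im h₃ h₄) (2 * (-p / q - 2) * u + 2 * π / q) (-4 * v + 2 * π) 0
    simp only [mem_univ, and_self, ofPred_true] at h
    exact h.congr fun st _ => by rw [im_Vpot]; ring

/-- **Lemma 5.5 of the paper (convexity).** `Im V` is strictly concave in the real parts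
`(u,v)` on `Ω = {0 < v+u < π/2, 0 < v−u < π/2}` (for any fixed imaginary parts `(s,t)`),
and strictly convex in the imaginary parts `(s,t)` on all of `ℝ²`
(for any fixed `(u,v) ∈ Ω`). -/
theorem ImV_concave_convex (p q : ℤ) (hq : q ≠ 0) :
    (∀ s t : ℝ, StrictConcaveOn ℝ
        {uv : ℝ × ℝ | 0 < uv.2 + uv.1 ∧ uv.2 + uv.1 < π / 2 ∧
          0 < uv.2 - uv.1 ∧ uv.2 - uv.1 < π / 2}
        (fun uv : ℝ × ℝ =>
          (Vpot p q ((uv.1 : ℂ) + Complex.I * (s : ℂ))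
            ((uv.2 : ℂ) + Complex.I * (t : ℂ))).im)) ∧
    (∀ u v : ℝ, 0 < v + u → v + u < π / 2 → 0 < v - u → v - u < π / 2 →
      StrictConvexOn ℝ Set.univ
        (fun st : ℝ × ℝ =>
          (Vpot p q ((u : ℂ) + Complex.I * (st.1 : ℂ))
            ((v : ℂ) + Complex.I * (st.2 : ℂ))).im)) :=
  ImV_concave_convex_general p q
end

section
/- For every ε > 0 there exists δ > 0 such that the function r ↦ ∫_{−ε}^{ε} e^{−r z²} dz − √(π/r) is O(e^{−δ r}) as r → ∞; that is, there exist C > 0 and r₀ such that for all real r ≥ r₀, | ∫_{−ε}^{ε} e^{−r z²} dz − √(π/r) | ≤ C e^{−δ r}. -/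
open Real MeasureTheory

/-! Outside `[-ε, ε]` one has `e^{-r z²} ≤ e^{-(r-1) ε²} e^{-z²}`, so the Gaussian tail beyond `ε`
is at most `√π e^{ε²} e^{-ε² r}`; and that tail is exactly the gap between the truncated integral
and the full Gaussian integral `√(π/r)`. -/

lemma exp_neg_mul_sq_le_of_sq_le {b r ε z : ℝ} (hbr : b ≤ r) (hz : ε ^ 2 ≤ z ^ 2) :
    exp (-r * z ^ 2) ≤ exp (-(r - b) * ε ^ 2) * exp (-b * z ^ 2) := by
  rw [← exp_add]
  exact exp_le_exp.2 (by nlinarith)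

lemma setIntegral_exp_neg_mul_sq_le {b r ε : ℝ} (hb : 0 < b) (hbr : b ≤ r) {s : Set ℝ}
    (hs : MeasurableSet s) (hεs : ∀ z ∈ s, ε ^ 2 ≤ z ^ 2) :
    ∫ z in s, exp (-r * z ^ 2) ≤ √(π / b) * exp (-(r - b) * ε ^ 2) := by
  have hg : Integrable fun z : ℝ => exp (-(r - b) * ε ^ 2) * exp (-b * z ^ 2) :=
    (integrable_exp_neg_mul_sq hb).const_mul _
  calc ∫ z in s, exp (-r * z ^ 2)
      ≤ ∫ z in s, exp (-(r - b) * ε ^ 2) * exp (-b * z ^ 2) :=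
        setIntegral_mono_on (integrable_exp_neg_mul_sq (hb.trans_le hbr)).integrableOn
          hg.integrableOn hs fun z hz => exp_neg_mul_sq_le_of_sq_le hbr (hεs z hz)
    _ ≤ ∫ z, exp (-(r - b) * ε ^ 2) * exp (-b * z ^ 2) :=
        setIntegral_le_integral hg (.of_forall fun _ => by positivity)
    _ = √(π / b) * exp (-(r - b) * ε ^ 2) := by
        rw [integral_const_mul, integral_gaussian, mul_comm]

lemma sqrt_pi_div_sub_intervalIntegral_exp_neg_mul_sq {r ε : ℝ} (hr : 0 < r) (hε : 0 ≤ ε) :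
    √(π / r) - ∫ z in -ε..ε, exp (-r * z ^ 2) = ∫ z in (Set.Ioc (-ε) ε)ᶜ, exp (-r * z ^ 2) := by
  rw [← integral_gaussian, intervalIntegral.integral_of_le (by linarith),
    ← integral_add_compl measurableSet_Ioc (integrable_exp_neg_mul_sq hr), add_sub_cancel_left]

lemma sq_le_sq_of_mem_compl_Ioc {ε z : ℝ} (hε : 0 ≤ ε) (hz : z ∈ (Set.Ioc (-ε) ε)ᶜ) :
    ε ^ 2 ≤ z ^ 2 := by
  rw [Set.mem_compl_iff, Set.mem_Ioc, not_and_or, not_lt, not_le] at hz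
  rcases hz with h | h <;> nlinarith

/-- **Lemma A.2 (1) of the paper.** For every `ε > 0` there exists `δ > 0` such that
`∫_{−ε}^{ε} e^{−rz²} dz = √(π/r) + O(e^{−δr})` as `r → ∞`. -/
theorem gaussian_integral_truncated (ε : ℝ) (hε : 0 < ε) :
    ∃ δ : ℝ, 0 < δ ∧ ∃ C : ℝ, 0 < C ∧ ∃ r₀ : ℝ, ∀ r : ℝ, r₀ ≤ r →
      |(∫ z : ℝ in -ε..ε, Real.exp (-r * z ^ 2)) - Real.sqrt (π / r)| ≤
        C * Real.exp (-δ * r) := by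
  refine ⟨ε ^ 2, by positivity, √π * exp (ε ^ 2), by positivity, 1, fun r hr => ?_⟩
  have htail := setIntegral_exp_neg_mul_sq_le one_pos hr measurableSet_Ioc.compl
    fun z hz => sq_le_sq_of_mem_compl_Ioc hε.le hz
  rw [abs_sub_comm, sqrt_pi_div_sub_intervalIntegral_exp_neg_mul_sq (by linarith) hε.le,
    abs_of_nonneg (setIntegral_nonneg measurableSet_Ioc.compl fun _ _ => (exp_pos _).le)]
  calc _ ≤ √(π / 1) * exp (-(r - 1) * ε ^ 2) := htail
    _ = √π * exp (ε ^ 2) * exp (-ε ^ 2 * r) := by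
      rw [div_one, mul_assoc, ← exp_add]
      ring_nf
end

section
/- For every ε > 0 there exists δ > 0 such that the function r ↦ ∫_{−ε}^{ε} z² e^{−r z²} dz − (1/2)√(π/r³) is O(e^{−δ r}) as r → ∞; that is, there exist C > 0 and r₀ such that for all real r ≥ r₀, | ∫_{−ε}^{ε} z² e^{−r z²} dz − (1/2)√(π/r³) | ≤ C e^{−δ r}. -/
/-!
Over the whole line the second Gaussian moment is exact: `∫ z² e^{-r z²} = (1/2)√(π/r³)`.
The truncated integral differs from it by the tail over `|z| ≥ ε`, and there
`e^{-r z²} = e^{-(r-1) z²} e^{-z²} ≤ e^{-(r-1) ε²} e^{-z²}`, so the tail is at most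
`e^{ε²} e^{-ε² r}` times the moment for `r = 1`.
-/

open Real MeasureTheory Set

lemma integrable_sq_mul_exp_neg_mul_sq {b : ℝ} (hb : 0 < b) :
    Integrable fun z : ℝ => z ^ 2 * exp (-b * z ^ 2) := by
  simpa [rpow_natCast] using integrable_rpow_mul_exp_neg_mul_sq hb (s := 2) (by norm_num)

lemma integral_sq_mul_exp_neg_mul_sq {b : ℝ} (hb : 0 < b) :
    ∫ z : ℝ, z ^ 2 * exp (-b * z ^ 2) = 1 / 2 * √(π / b ^ 3) := by
  have h_even : ∫ z : ℝ, z ^ 2 * exp (-b * z ^ 2)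
      = 2 * ∫ x in Ioi (0 : ℝ), x ^ (2 : ℝ) * exp (-b * x ^ (2 : ℝ)) := by
    simp_rw [rpow_two]
    rw [← integral_comp_abs (f := fun x => x ^ 2 * exp (-b * x ^ 2))]
    simp only [sq_abs]
  have h_gamma : Gamma ((2 + 1) / 2) = √π / 2 := by
    rw [show (2 + 1) / 2 = (1 / 2 : ℝ) + 1 by norm_num, Gamma_add_one (by norm_num),
      Gamma_one_half_eq]
    ring
  have h_sqrt : √(b ^ 3) = b ^ (3 / 2 : ℝ) := by
    rw [sqrt_eq_rpow, ← rpow_natCast, ← rpow_mul hb.le]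
    norm_num
  have h_pow : b ^ (-(2 + 1) / 2 : ℝ) = (b ^ (3 / 2 : ℝ))⁻¹ := by
    rw [show (-(2 + 1) / 2 : ℝ) = -(3 / 2) by norm_num, rpow_neg hb.le]
  have h_pos : 0 < b ^ (3 / 2 : ℝ) := rpow_pos_of_pos hb _
  rw [h_even, integral_rpow_mul_exp_neg_mul_rpow (by norm_num) (by norm_num) hb, h_gamma,
    sqrt_div pi_pos.le, h_sqrt, h_pow]
  field_simp

lemma intervalIntegral_sub_integral_eq_neg_setIntegral_compl {f : ℝ → ℝ} (hf : Integrable f)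
    {a b : ℝ} (hab : a ≤ b) :
    (∫ z in a..b, f z) - ∫ z, f z = -∫ z in (Ioc a b)ᶜ, f z := by
  rw [intervalIntegral.integral_of_le hab, ← integral_add_compl measurableSet_Ioc hf]
  ring

lemma sq_le_sq_of_notMem_Ioc_neg {ε z : ℝ} (hε : 0 ≤ ε) (hz : z ∉ Ioc (-ε) ε) :
    ε ^ 2 ≤ z ^ 2 := by
  rw [mem_Ioc, not_and_or, not_lt, not_le] at hz
  rcases hz with hz | hz <;> nlinarith

lemma setIntegral_compl_Ioc_sq_mul_exp_neg_mul_sq_le {ε b r : ℝ} (hε : 0 ≤ ε) (hb : 0 < b)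
    (hbr : b ≤ r) :
    ∫ z in (Ioc (-ε) ε)ᶜ, z ^ 2 * exp (-r * z ^ 2) ≤
      exp (-(r - b) * ε ^ 2) * ∫ z, z ^ 2 * exp (-b * z ^ 2) := by
  have hg := (integrable_sq_mul_exp_neg_mul_sq hb).const_mul (exp (-(r - b) * ε ^ 2))
  have h_pointwise : ∀ z ∈ (Ioc (-ε) ε)ᶜ, z ^ 2 * exp (-r * z ^ 2) ≤
      exp (-(r - b) * ε ^ 2) * (z ^ 2 * exp (-b * z ^ 2)) := by
    intro z hz
    have hz2 := sq_le_sq_of_notMem_Ioc_neg hε hz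
    have h_exp : -r * z ^ 2 ≤ -(r - b) * ε ^ 2 + -b * z ^ 2 := by nlinarith
    calc z ^ 2 * exp (-r * z ^ 2)
        ≤ z ^ 2 * exp (-(r - b) * ε ^ 2 + -b * z ^ 2) := by gcongr
      _ = exp (-(r - b) * ε ^ 2) * (z ^ 2 * exp (-b * z ^ 2)) := by rw [exp_add]; ring
  calc ∫ z in (Ioc (-ε) ε)ᶜ, z ^ 2 * exp (-r * z ^ 2)
      ≤ ∫ z in (Ioc (-ε) ε)ᶜ, exp (-(r - b) * ε ^ 2) * (z ^ 2 * exp (-b * z ^ 2)) :=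
        setIntegral_mono_on (integrable_sq_mul_exp_neg_mul_sq (hb.trans_le hbr)).integrableOn
          hg.integrableOn measurableSet_Ioc.compl h_pointwise
    _ ≤ ∫ z, exp (-(r - b) * ε ^ 2) * (z ^ 2 * exp (-b * z ^ 2)) :=
        setIntegral_le_integral hg (.of_forall fun z => by positivity)
    _ = exp (-(r - b) * ε ^ 2) * ∫ z, z ^ 2 * exp (-b * z ^ 2) := integral_const_mul _ _

/-- **Lemma A.2 (2) of the paper.** For every `ε > 0` there exists `δ > 0` such that
`∫_{−ε}^{ε} z² e^{−rz²} dz = (1/2)√(π/r³) + O(e^{−δr})` as `r → ∞`. -/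
theorem gaussian_moment_integral_truncated (ε : ℝ) (hε : 0 < ε) :
    ∃ δ : ℝ, 0 < δ ∧ ∃ C : ℝ, 0 < C ∧ ∃ r₀ : ℝ, ∀ r : ℝ, r₀ ≤ r →
      |(∫ z : ℝ in -ε..ε, z ^ 2 * Real.exp (-r * z ^ 2)) -
          (1 / 2) * Real.sqrt (π / r ^ 3)| ≤
        C * Real.exp (-δ * r) := by
  refine ⟨ε ^ 2, by positivity, exp (ε ^ 2) * (1 / 2 * √π), by positivity, 1, fun r hr => ?_⟩
  have hr_pos : 0 < r := one_pos.trans_le hr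
  rw [← integral_sq_mul_exp_neg_mul_sq hr_pos,
    intervalIntegral_sub_integral_eq_neg_setIntegral_compl
      (integrable_sq_mul_exp_neg_mul_sq hr_pos) (by linarith), abs_neg,
    abs_of_nonneg (setIntegral_nonneg measurableSet_Ioc.compl fun z _ => by positivity)]
  calc ∫ z in (Ioc (-ε) ε)ᶜ, z ^ 2 * exp (-r * z ^ 2)
      ≤ exp (-(r - 1) * ε ^ 2) * ∫ z, z ^ 2 * exp (-1 * z ^ 2) :=
        setIntegral_compl_Ioc_sq_mul_exp_neg_mul_sq_le hε.le one_pos hr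
    _ = exp (ε ^ 2) * (1 / 2 * √π) * exp (-ε ^ 2 * r) := by
      rw [integral_sq_mul_exp_neg_mul_sq one_pos, one_pow, div_one, mul_comm (exp (ε ^ 2)),
        mul_assoc, ← exp_add]
      ring_nf
end
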